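/- Let f : ℝ^n → ℝ be differentiable and L > 0. Then the following two conditions are equivalent: (a) f(y) ≥ f(x) + ⟨∇f(x), y − x⟩ + (1/(2L))‖∇f(y) − ∇f(x)‖² for all x, y ∈ ℝ^n; (b) f(αx + (1−α)y) ≤ αf(x) + (1−α)f(y) − (α(1−α)/(2L))‖∇f(x) − ∇f(y)‖² for all x, y ∈ ℝ^n and all α ∈ [0,1]. -/

import Mathlib

/-!
(a) ⇒ (b): apply (a) at `z = αx + (1 - α)y` towards `x` and towards `y`; the convex combination
of the two inequalities kills the linear terms, and the two gradient terms combine into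
`α(1 - α)‖∇f x - ∇f y‖²` because `α‖u‖² + (1 - α)‖v‖² ≥ α(1 - α)‖u - v‖²`.

(b) ⇒ (a): (b) with `α = t` bounds the difference quotient of `t ↦ f (x + t(y - x))` at `0`
by `f y - f x - (1 - t)/(2L)‖∇f y - ∇f x‖²`; letting `t → 0⁺` gives (a).
-/

open RealInnerProductSpace Filter Topology Set

theorem HasDerivWithinAt.le_of_slope_le {φ u : ℝ → ℝ} {a φ' : ℝ}
    (hφ : HasDerivWithinAt φ φ' (Ioi a) a) (hu : ContinuousWithinAt u (Ioi a) a)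
    (h : ∀ᶠ t in 𝓝[>] a, slope φ a t ≤ u t) : φ' ≤ u a :=
  le_of_tendsto_of_tendsto ((hasDerivWithinAt_iff_tendsto_slope' self_notMem_Ioi).mp hφ) hu h

section InnerProductSpace

variable {E : Type*} [NormedAddCommGroup E] [InnerProductSpace ℝ E]

theorem mul_one_sub_mul_norm_sub_sq_le (α : ℝ) (u v : E) :
    α * (1 - α) * ‖u - v‖ ^ 2 ≤ α * ‖u‖ ^ 2 + (1 - α) * ‖v‖ ^ 2 := by
  have h : ‖α • u + (1 - α) • v‖ ^ 2 + α * (1 - α) * ‖u - v‖ ^ 2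
      = α * ‖u‖ ^ 2 + (1 - α) * ‖v‖ ^ 2 := by
    rw [norm_add_sq_real, norm_sub_sq_real, norm_smul, norm_smul, real_inner_smul_left,
      real_inner_smul_right, mul_pow, mul_pow, Real.norm_eq_abs, Real.norm_eq_abs, sq_abs, sq_abs]
    ring
  linarith [sq_nonneg ‖α • u + (1 - α) • v‖]

theorem HasGradientAt.hasDerivAt_comp_lineMap {f : E → ℝ} {g x : E} [CompleteSpace E]
    (hf : HasGradientAt f g x) (y : E) :
    HasDerivAt (fun t : ℝ ↦ f (AffineMap.lineMap x y t)) ⟪g, y - x⟫ 0 :=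
  hf.hasFDerivAt.comp_hasDerivAt_of_eq 0 AffineMap.hasDerivAt_lineMap
    (AffineMap.lineMap_apply_zero x y).symm

theorem jensenGrad_of_lowerBound {f : E → ℝ} {g : E → E} {c : ℝ} (hc : 0 ≤ c)
    (h : ∀ x y, f x + ⟪g x, y - x⟫ + c * ‖g y - g x‖ ^ 2 ≤ f y)
    (x y : E) {α : ℝ} (hα : α ∈ Icc (0 : ℝ) 1) :
    f (α • x + (1 - α) • y) ≤ α * f x + (1 - α) * f y - c * (α * (1 - α) * ‖g x - g y‖ ^ 2) := by
  set z := α • x + (1 - α) • y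
  have hx := mul_le_mul_of_nonneg_left (h z x) hα.1
  have hy := mul_le_mul_of_nonneg_left (h z y) (sub_nonneg.mpr hα.2)
  have hlin : α * ⟪g z, x - z⟫ + (1 - α) * ⟪g z, y - z⟫ = 0 := by
    rw [← real_inner_smul_right, ← real_inner_smul_right, ← inner_add_right,
      show α • (x - z) + (1 - α) • (y - z) = 0 by simp only [z]; module, inner_zero_right]
  have hgrad := mul_le_mul_of_nonneg_left
    (mul_one_sub_mul_norm_sub_sq_le α (g x - g z) (g y - g z)) hc
  rw [sub_sub_sub_cancel_right] at hgrad
  nlinarith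

theorem lowerBound_of_jensenGrad {f : E → ℝ} {g : E → E} {c : ℝ} {x : E}
    [CompleteSpace E] (hf : HasGradientAt f (g x) x)
    (h : ∀ y, ∀ α ∈ Icc (0 : ℝ) 1,
      f (α • y + (1 - α) • x) ≤ α * f y + (1 - α) * f x - c * (α * (1 - α) * ‖g y - g x‖ ^ 2))
    (y : E) :
    f x + ⟪g x, y - x⟫ + c * ‖g y - g x‖ ^ 2 ≤ f y := by
  have hslope : ∀ t ∈ Ioo (0 : ℝ) 1, slope (fun t : ℝ ↦ f (AffineMap.lineMap x y t)) 0 t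
      ≤ f y - f x - c * ((1 - t) * ‖g y - g x‖ ^ 2) := by
    intro t ⟨ht0, ht1⟩
    have hjensen := h y t ⟨ht0.le, ht1.le⟩
    rw [slope_def_field, AffineMap.lineMap_apply_zero, AffineMap.lineMap_apply_module, add_comm,
      sub_zero, div_le_iff₀ ht0]
    linear_combination hjensen
  have hlim := (hf.hasDerivAt_comp_lineMap y).hasDerivWithinAt.le_of_slope_le
    (u := fun t ↦ f y - f x - c * ((1 - t) * ‖g y - g x‖ ^ 2))
    (by fun_prop : Continuous _).continuousWithinAt
    (by filter_upwards [Ioo_mem_nhdsGT zero_lt_one] using hslope)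
  linarith

end InnerProductSpace

/-- For differentiable `f` and `L > 0`, the lower quadratic bound with gradient
difference is equivalent to the corresponding Jensen-type inequality. -/
theorem lowerBound_iff_jensenGrad (n : ℕ) (L : ℝ) (hL : 0 < L)
    (f : EuclideanSpace ℝ (Fin n) → ℝ) (hf : Differentiable ℝ f) :
    (∀ x y : EuclideanSpace ℝ (Fin n),
        f y ≥ f x + ⟪gradient f x, y - x⟫ + 1 / (2 * L) * ‖gradient f y - gradient f x‖ ^ 2) ↔
      (∀ x y : EuclideanSpace ℝ (Fin n), ∀ α ∈ Set.Icc (0 : ℝ) 1,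
        f (α • x + (1 - α) • y) ≤ α * f x + (1 - α) * f y -
          α * (1 - α) / (2 * L) * ‖gradient f x - gradient f y‖ ^ 2) := by
  have hscale : ∀ α (N : ℝ), α * (1 - α) / (2 * L) * N = 1 / (2 * L) * (α * (1 - α) * N) :=
    fun _ _ ↦ by ring
  simp only [hscale, ge_iff_le]
  constructor
  · exact jensenGrad_of_lowerBound (by positivity)
  · exact fun h x ↦ lowerBound_of_jensenGrad (hf x).hasGradientAt (fun y ↦ h y x)
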